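/- arXiv:2303.05374 — 6 statements merged into one kernel-verified Lean document; each statement's English description precedes it below -/
import Mathlib

section
/- For every p in (0,1), the complete elliptic integral of the second kind satisfies E(p) > sqrt(2 - p^2), where E(p) = ∫₀^{π/2} sqrt(1 - p² sin²θ) dθ. -/
/-!
By Cauchy–Schwarz, `(cos θ + (1 - p²) sin θ)² ≤ (1 - p² sin² θ)(2 - p²)`, the defect being
`(1 - p²)(cos θ - sin θ)²`. Hence `√(1 - p² sin² θ) √(2 - p²) ≥ cos θ + (1 - p²) sin θ`, strictly
at `θ = 0`, and integrating over `[0, π/2]` gives `E(p) √(2 - p²) > 2 - p²`.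
-/

open Real intervalIntegral

lemma one_sub_mul_sin_sq_mul_eq (q θ : ℝ) :
    (1 - q * sin θ ^ 2) * (2 - q) =
      (cos θ + (1 - q) * sin θ) ^ 2 + (1 - q) * (cos θ - sin θ) ^ 2 := by
  linear_combination (q - 2) * sin_sq_add_cos_sq θ

lemma cos_add_mul_sin_le_sqrt_mul_sqrt {q : ℝ} (hq : q ≤ 1) (θ : ℝ) :
    cos θ + (1 - q) * sin θ ≤ √(1 - q * sin θ ^ 2) * √(2 - q) := by
  rw [← sqrt_mul' _ (by linarith)]
  apply le_sqrt_of_sq_le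
  rw [one_sub_mul_sin_sq_mul_eq]
  nlinarith [sq_nonneg (cos θ - sin θ)]

lemma integral_cos_add_mul_sin (k : ℝ) :
    ∫ θ in (0 : ℝ)..π / 2, (cos θ + k * sin θ) = 1 + k := by
  rw [integral_add intervalIntegrable_cos (intervalIntegrable_sin.const_mul k),
    integral_const_mul, integral_cos, integral_sin]
  simp

/-- For every `p ∈ (0,1)`, the complete elliptic integral of the second kind
satisfies `E(p) > sqrt (2 - p^2)`. -/
theorem elliptic_second_kind_gt (p : ℝ) (hp : p ∈ Set.Ioo (0:ℝ) 1) :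
    (∫ θ in (0:ℝ)..(Real.pi / 2), Real.sqrt (1 - p ^ 2 * Real.sin θ ^ 2))
      > Real.sqrt (2 - p ^ 2) := by
  have hp2 : p ^ 2 < 1 := by nlinarith [hp.1, hp.2]
  have hc : 1 < √(2 - p ^ 2) := by rw [lt_sqrt zero_le_one]; linarith
  have hlt : (∫ θ in (0 : ℝ)..π / 2, (cos θ + (1 - p ^ 2) * sin θ)) <
      ∫ θ in (0 : ℝ)..π / 2, √(1 - p ^ 2 * sin θ ^ 2) * √(2 - p ^ 2) := by
    refine integral_lt_integral_of_continuousOn_of_le_of_exists_lt (by positivity)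
      (by fun_prop) (by fun_prop)
      (fun θ _ => cos_add_mul_sin_le_sqrt_mul_sqrt hp2.le θ) ⟨0, ?_, ?_⟩
    · exact Set.left_mem_Icc.2 (by positivity)
    · simpa using hc
  rw [integral_cos_add_mul_sin, integral_mul_const,
    show 1 + (1 - p ^ 2) = √(2 - p ^ 2) * √(2 - p ^ 2) by
      rw [mul_self_sqrt (by linarith)]; ring] at hlt
  exact lt_of_mul_lt_mul_right hlt (sqrt_nonneg _)
end

section
/- For 0 < p² < α² < 1, the complete elliptic integral of the third kind satisfies Π(α², p) ≤ (π/2) · sqrt(α² / ((1 - α²)(α² - p²))). -/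
/-!
Since `1 - p² sin²θ ≥ 1 - p²`, the integrand is at most `(1 - p²)^(-1/2) (1 - α² sin²θ)⁻¹`, whose
integral is `π / (2 √((1 - α²)(1 - p²)))`. This already gives the claim, because
`α² (1 - p²) - (α² - p²) = p² (1 - α²) ≥ 0`.
-/

open Real MeasureTheory Set intervalIntegral

theorem integral_Ioi_inv_one_add_mul_sq {k : ℝ} (hk : 0 < k) :
    ∫ x in Ioi (0 : ℝ), (1 + k * x ^ 2)⁻¹ = π / (2 * √k) := by
  have hs : 0 < √k := sqrt_pos.2 hk
  have hsq : ∀ x : ℝ, k * x ^ 2 = (√k * x) ^ 2 := fun x => by rw [mul_pow, sq_sqrt hk.le]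
  simp_rw [hsq]
  rw [integral_comp_mul_left_Ioi (fun x => (1 + x ^ 2)⁻¹) 0 hs, mul_zero,
    integral_Ioi_inv_one_add_sq, arctan_zero, smul_eq_mul]
  field_simp
  ring

theorem image_arctan_Ioi_zero : arctan '' Ioi 0 = Ioo 0 (π / 2) := by
  ext y
  constructor
  · rintro ⟨x, hx, rfl⟩
    exact ⟨arctan_zero ▸ arctan_strictMono hx, arctan_lt_pi_div_two x⟩
  · rintro ⟨hy₀, hy₁⟩
    exact ⟨tan y, tan_pos_of_pos_of_lt_pi_div_two hy₀ hy₁,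
      arctan_tan (by linarith [pi_pos]) hy₁⟩

theorem one_sub_mul_sin_sq_pos {c : ℝ} (hc : c < 1) (θ : ℝ) : 0 < 1 - c * sin θ ^ 2 := by
  rcases le_or_gt c 0 with h | h
  · nlinarith [sq_nonneg (sin θ)]
  · nlinarith [sin_sq_le_one θ]

-- The substitution `θ = arctan x` turns the integrand into `(1 + (1 - c) x²)⁻¹`.
theorem integral_inv_one_sub_mul_sin_sq {c : ℝ} (hc : c < 1) :
    ∫ θ in (0 : ℝ)..π / 2, (1 - c * sin θ ^ 2)⁻¹ = π / (2 * √(1 - c)) := by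
  rw [integral_of_le (by positivity), integral_Ioc_eq_integral_Ioo, ← image_arctan_Ioi_zero,
    integral_image_eq_integral_abs_deriv_smul measurableSet_Ioi
      (fun x _ => (hasDerivAt_arctan x).hasDerivWithinAt) arctan_injective.injOn,
    ← integral_Ioi_inv_one_add_mul_sq (sub_pos.2 hc)]
  refine setIntegral_congr_fun measurableSet_Ioi fun x _ => ?_
  have hx : 0 < 1 + x ^ 2 := by positivity
  rw [abs_of_pos (by positivity), smul_eq_mul, sin_arctan, div_pow, sq_sqrt hx.le]
  field_simp
  ring

theorem integral_inv_mul_sqrt_one_sub_mul_sin_sq_le {a b : ℝ} (ha : a < 1) (hb₀ : 0 ≤ b)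
    (hb₁ : b < 1) :
    ∫ θ in (0 : ℝ)..π / 2, 1 / ((1 - a * sin θ ^ 2) * √(1 - b * sin θ ^ 2))
      ≤ π / (2 * √((1 - a) * (1 - b))) := by
  have hA := one_sub_mul_sin_sq_pos ha
  have hB := one_sub_mul_sin_sq_pos hb₁
  have hb : 0 < √(1 - b) := sqrt_pos.2 (sub_pos.2 hb₁)
  have hpointwise : ∀ θ, 1 / ((1 - a * sin θ ^ 2) * √(1 - b * sin θ ^ 2))
      ≤ (√(1 - b))⁻¹ * (1 - a * sin θ ^ 2)⁻¹ := fun θ => by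
    have : √(1 - b) ≤ √(1 - b * sin θ ^ 2) :=
      sqrt_le_sqrt (by nlinarith [sin_sq_le_one θ])
    rw [one_div, mul_inv, mul_comm]
    gcongr
    exact inv_nonneg.2 (hA θ).le
  calc _ ≤ ∫ θ in (0 : ℝ)..π / 2, (√(1 - b))⁻¹ * (1 - a * sin θ ^ 2)⁻¹ :=
        integral_mono (by positivity)
          ((continuous_const.div (by fun_prop)
            fun θ => (mul_pos (hA θ) (sqrt_pos.2 (hB θ))).ne').intervalIntegrable _ _)
          (((Continuous.inv₀ (by fun_prop) fun θ => (hA θ).ne').const_mul _).intervalIntegrable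
            _ _)
          hpointwise
    _ = π / (2 * √((1 - a) * (1 - b))) := by
      rw [intervalIntegral.integral_const_mul, integral_inv_one_sub_mul_sin_sq ha,
        sqrt_mul (sub_pos.2 ha).le]
      field_simp

theorem elliptic_third_kind_le_general (p α : ℝ) (h1 : p ^ 2 < α ^ 2)
    (h2 : α ^ 2 < 1) :
    (∫ θ in (0:ℝ)..(Real.pi / 2),
        1 / ((1 - α ^ 2 * Real.sin θ ^ 2) * Real.sqrt (1 - p ^ 2 * Real.sin θ ^ 2)))
      ≤ (Real.pi / 2) * Real.sqrt (α ^ 2 / ((1 - α ^ 2) * (α ^ 2 - p ^ 2))) := by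
  have hα : 0 < 1 - α ^ 2 := sub_pos.2 h2
  have hp : 0 < 1 - p ^ 2 := by linarith
  have hαp : 0 < α ^ 2 - p ^ 2 := sub_pos.2 h1
  calc _ ≤ π / (2 * √((1 - α ^ 2) * (1 - p ^ 2))) :=
        integral_inv_mul_sqrt_one_sub_mul_sin_sq_le h2 (sq_nonneg p) (h1.trans h2)
    _ = π / 2 * √(1 / ((1 - α ^ 2) * (1 - p ^ 2))) := by
      rw [sqrt_div' _ (mul_pos hα hp).le, sqrt_one]
      ring
    _ ≤ π / 2 * √(α ^ 2 / ((1 - α ^ 2) * (α ^ 2 - p ^ 2))) := by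
      gcongr π / 2 * √?_
      rw [div_le_div_iff₀ (mul_pos hα hp) (mul_pos hα hαp)]
      nlinarith [mul_nonneg (sq_nonneg p) (sq_nonneg (1 - α ^ 2))]

/-- For `0 < p² < α² < 1`, the complete elliptic integral of the third kind
satisfies `Π(α², p) ≤ (π/2) * sqrt (α² / ((1-α²)(α²-p²)))`. -/
theorem elliptic_third_kind_le (p α : ℝ) (h0 : 0 < p ^ 2) (h1 : p ^ 2 < α ^ 2)
    (h2 : α ^ 2 < 1) :
    (∫ θ in (0:ℝ)..(Real.pi / 2),
        1 / ((1 - α ^ 2 * Real.sin θ ^ 2) * Real.sqrt (1 - p ^ 2 * Real.sin θ ^ 2)))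
      ≤ (Real.pi / 2) * Real.sqrt (α ^ 2 / ((1 - α ^ 2) * (α ^ 2 - p ^ 2))) :=
  elliptic_third_kind_le_general p α h1 h2
end

section
/- There exists η ∈ (0,1) such that for all p ∈ (0,1), (1/2)·sqrt(1-p²)·sqrt(2-p²) · ∫_{-π/2}^{π/2} sqrt(1 - p² sin²θ)/(1 - p²(2-p²) sin²θ) dθ < (1 + η)·(π/2). -/
/-!
Put `a = 1 - p²`, `T θ = cos² θ + a sin² θ` and `D θ = cos² θ + a² sin² θ`, so that the integrand is
`√T / D` and `D = (1 + a) T - a`. The AM-GM inequality `2 √(2a) √((1 + a) T) ≤ 2a + (1 + a) T`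
bounds `√(2a(1+a)) √T / D` by `1/2 + (3a/2) / D`, and `∫ 1 / D = π / a`. Hence the left-hand side
is at most `π / √2 = √2 · π/2` for every `p`, and `η = 1/2` works.
-/

open Real

lemma cos_sq_add_mul_sin_sq_pos {b : ℝ} (hb : 0 < b) (θ : ℝ) :
    0 < cos θ ^ 2 + b * sin θ ^ 2 := by
  rcases eq_or_ne (sin θ) 0 with h | h
  · nlinarith [sin_sq_add_cos_sq θ]
  · have := pow_pos (abs_pos.2 h) 2
    rw [sq_abs] at this
    positivity

-- `arctan (b tan θ) = θ + arctan ((b - 1) tan θ / (1 + b tan² θ))`, and the right side has no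
-- poles at `±π/2`.
lemma hasDerivAt_arctan_antiderivative {b : ℝ} (hb : 0 < b) (θ : ℝ) :
    HasDerivAt (fun θ => (θ + arctan ((b - 1) * sin θ * cos θ / (cos θ ^ 2 + b * sin θ ^ 2))) / b)
      (cos θ ^ 2 + b ^ 2 * sin θ ^ 2)⁻¹ θ := by
  have hN := (cos_sq_add_mul_sin_sq_pos hb θ).ne'
  have hD := (cos_sq_add_mul_sin_sq_pos (pow_pos hb 2) θ).ne'
  have hu : HasDerivAt (fun θ => (b - 1) * sin θ * cos θ / (cos θ ^ 2 + b * sin θ ^ 2)) _ θ :=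
    (((hasDerivAt_sin θ).const_mul (b - 1)).mul (hasDerivAt_cos θ)).div
      (((hasDerivAt_cos θ).pow 2).add (((hasDerivAt_sin θ).pow 2).const_mul b)) hN
  refine (((hasDerivAt_id' θ).add hu.arctan).div_const b).congr_deriv ?_
  have hc := sin_sq_add_cos_sq θ
  simp only [Pi.mul_apply, Nat.cast_ofNat, pow_one, Nat.add_one_sub_one]
  field_simp
  linear_combination b * (cos θ ^ 2 + b ^ 2 * sin θ ^ 2) * (sin θ ^ 2 + cos θ ^ 2) * hc

lemma continuous_inv_cos_sq_add_mul_sin_sq {b : ℝ} (hb : 0 < b) :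
    Continuous fun θ => (cos θ ^ 2 + b * sin θ ^ 2)⁻¹ :=
  (by fun_prop : Continuous fun θ => cos θ ^ 2 + b * sin θ ^ 2).inv₀
    fun θ => (cos_sq_add_mul_sin_sq_pos hb θ).ne'

theorem integral_inv_cos_sq_add_sq_mul_sin_sq {b : ℝ} (hb : 0 < b) :
    ∫ θ in -(π / 2)..π / 2, (cos θ ^ 2 + b ^ 2 * sin θ ^ 2)⁻¹ = π / b := by
  rw [intervalIntegral.integral_eq_sub_of_hasDerivAt
    (fun θ _ => hasDerivAt_arctan_antiderivative hb θ)
    ((continuous_inv_cos_sq_add_mul_sin_sq (pow_pos hb 2)).intervalIntegrable _ _)]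
  simp only [sin_neg, cos_neg, sin_pi_div_two, cos_pi_div_two, mul_zero, zero_div,
    arctan_zero]
  ring

lemma two_mul_sqrt_mul_sqrt_cos_sq_add_mul_sin_sq_le {a : ℝ} (ha : 0 ≤ a) (θ : ℝ) :
    2 * √(2 * a * (1 + a)) * √(cos θ ^ 2 + a * sin θ ^ 2)
      ≤ cos θ ^ 2 + a ^ 2 * sin θ ^ 2 + 3 * a := by
  calc 2 * √(2 * a * (1 + a)) * √(cos θ ^ 2 + a * sin θ ^ 2)
      = 2 * √(2 * a) * √((1 + a) * (cos θ ^ 2 + a * sin θ ^ 2)) := by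
        rw [sqrt_mul (by positivity), sqrt_mul (by positivity), sqrt_mul (by positivity)]; ring
    _ ≤ √(2 * a) ^ 2 + √((1 + a) * (cos θ ^ 2 + a * sin θ ^ 2)) ^ 2 := two_mul_le_add_sq _ _
    _ = cos θ ^ 2 + a ^ 2 * sin θ ^ 2 + 3 * a := by
        rw [sq_sqrt (by positivity), sq_sqrt (by positivity)]
        linear_combination a * sin_sq_add_cos_sq θ

theorem sqrt_mul_integral_sqrt_div_le {a : ℝ} (ha : 0 < a) :
    √(2 * a * (1 + a)) * ∫ θ in -(π / 2)..π / 2,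
        √(cos θ ^ 2 + a * sin θ ^ 2) / (cos θ ^ 2 + a ^ 2 * sin θ ^ 2) ≤ 2 * π := by
  have hD := continuous_inv_cos_sq_add_mul_sin_sq (pow_pos ha 2)
  have hpoint : ∀ θ,
      √(2 * a * (1 + a)) * (√(cos θ ^ 2 + a * sin θ ^ 2) / (cos θ ^ 2 + a ^ 2 * sin θ ^ 2))
        ≤ 1 / 2 + 3 * a / 2 * (cos θ ^ 2 + a ^ 2 * sin θ ^ 2)⁻¹ := fun θ => by
    have hpos := cos_sq_add_mul_sin_sq_pos (pow_pos ha 2) θ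
    rw [mul_div_assoc', div_le_iff₀ hpos]
    field_simp
    linarith [two_mul_sqrt_mul_sqrt_cos_sq_add_mul_sin_sq_le ha.le θ]
  rw [← intervalIntegral.integral_const_mul]
  calc _ ≤ ∫ θ in -(π / 2)..π / 2, (1 / 2 + 3 * a / 2 * (cos θ ^ 2 + a ^ 2 * sin θ ^ 2)⁻¹) :=
        intervalIntegral.integral_mono_on (by linarith [pi_pos])
          ((continuous_const.mul ((continuous_sqrt.comp (by fun_prop)).mul hD)).intervalIntegrable _ _)
          ((continuous_const.add (continuous_const.mul hD)).intervalIntegrable _ _)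
          fun θ _ => hpoint θ
    _ = 2 * π := by
        rw [intervalIntegral.integral_add (f := fun _ => 1 / 2)
          (g := fun θ => 3 * a / 2 * (cos θ ^ 2 + a ^ 2 * sin θ ^ 2)⁻¹) intervalIntegrable_const
          ((continuous_const.mul hD).intervalIntegrable _ _), intervalIntegral.integral_const_mul,
          integral_inv_cos_sq_add_sq_mul_sin_sq ha, intervalIntegral.integral_const, smul_eq_mul]
        field_simp
        ring

/-- There exists `η ∈ (0,1)` such that for all `p ∈ (0,1)`,
`(1/2) sqrt(1-p²) sqrt(2-p²) ∫_{-π/2}^{π/2} sqrt(1-p² sin²θ)/(1-p²(2-p²) sin²θ) dθ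
  < (1+η) (π/2)`. -/
theorem uniform_bound_closing_integral :
    ∃ η ∈ Set.Ioo (0:ℝ) 1, ∀ p ∈ Set.Ioo (0:ℝ) 1,
      (1/2) * Real.sqrt (1 - p ^ 2) * Real.sqrt (2 - p ^ 2) *
        (∫ θ in (-(Real.pi/2))..(Real.pi/2),
          Real.sqrt (1 - p ^ 2 * Real.sin θ ^ 2) /
            (1 - p ^ 2 * (2 - p ^ 2) * Real.sin θ ^ 2))
        < (1 + η) * (Real.pi / 2) := by
  refine ⟨1 / 2, by norm_num, fun p ⟨hp0, hp1⟩ => ?_⟩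
  have ha : 0 < 1 - p ^ 2 := by nlinarith
  have hintegrand : ∀ θ, √(1 - p ^ 2 * sin θ ^ 2) / (1 - p ^ 2 * (2 - p ^ 2) * sin θ ^ 2)
      = √(cos θ ^ 2 + (1 - p ^ 2) * sin θ ^ 2) / (cos θ ^ 2 + (1 - p ^ 2) ^ 2 * sin θ ^ 2) :=
    fun θ => by rw [cos_sq']; ring_nf
  have hbound := sqrt_mul_integral_sqrt_div_le ha
  rw [sqrt_mul (by positivity), sqrt_mul zero_le_two] at hbound
  simp only [hintegrand]
  rw [show (2 : ℝ) - p ^ 2 = 1 + (1 - p ^ 2) by ring]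
  have hsqrt2 : 4 / 3 < √2 := by
    rw [lt_sqrt (by norm_num)]; norm_num
  nlinarith [pi_pos, sqrt_nonneg 2]
end

section
/- For a > 0, let u_ε : [-a,a] → ℍ², u_ε(x) = (x, ε·cosh(x/ε)) be the catenary curves. Then the hyperbolic elastic energy satisfies E(u_ε) = 4·(e^{2a/ε} − 1)/(e^{2a/ε} + 1) + 4·tanh(a/ε), and consequently E(u_ε) → 8 as ε → 0⁺. -/
noncomputable def hNorm (p v : ℝ × ℝ) : ℝ := Real.sqrt (v.1 ^ 2 + v.2 ^ 2) / p.2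

noncomputable def hCov (u X : ℝ → ℝ × ℝ) (x : ℝ) : ℝ × ℝ :=
  (deriv (fun t => (X t).1) x
      - ((X x).1 * deriv (fun t => (u t).2) x + (X x).2 * deriv (fun t => (u t).1) x) / (u x).2,
   deriv (fun t => (X t).2) x
      + ((X x).1 * deriv (fun t => (u t).1) x - (X x).2 * deriv (fun t => (u t).2) x) / (u x).2)

noncomputable def hTangent (u : ℝ → ℝ × ℝ) (x : ℝ) : ℝ × ℝ :=
  (hNorm (u x) (deriv u x))⁻¹ • deriv u x

noncomputable def hCurv (u : ℝ → ℝ × ℝ) (x : ℝ) : ℝ × ℝ :=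
  (hNorm (u x) (deriv u x))⁻¹ • hCov u (hTangent u) x

noncomputable def hElastic (u : ℝ → ℝ × ℝ) (a b : ℝ) : ℝ :=
  ∫ x in a..b, (hNorm (u x) (hCurv u x)) ^ 2 * hNorm (u x) (deriv u x)

/-!
Along the catenary `x ↦ (x, ε cosh (x / ε))` the hyperbolic speed is the constant `1 / ε`, and the
geodesic curvature is `2 / cosh (x / ε)`. The elastic integrand is therefore `4 / (ε cosh² (x / ε))`,
the derivative of `4 tanh (x / ε)`, so the energy on `[-a, a]` is `8 tanh (a / ε)`, which tends to `8`
as `a / ε → ∞`; the closed form in the statement is this value rewritten with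
`tanh t = (e^{2t} - 1) / (e^{2t} + 1)`.
-/

open Real Filter Topology

namespace Real

theorem hasDerivAt_tanh (x : ℝ) : HasDerivAt tanh (cosh x ^ 2)⁻¹ x := by
  have hc := (cosh_pos x).ne'
  have h := (hasDerivAt_sinh x).div (hasDerivAt_cosh x) hc
  rw [show sinh / cosh = tanh from funext fun y => (tanh_eq_sinh_div_cosh y).symm] at h
  refine h.congr_deriv ?_
  rw [← sq, ← sq, cosh_sq_sub_sinh_sq, one_div]

theorem sqrt_one_add_sinh_sq (x : ℝ) : √(1 ^ 2 + sinh x ^ 2) = cosh x := by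
  rw [one_pow, add_comm, ← cosh_sq, sqrt_sq (cosh_pos x).le]

theorem tanh_eq_exp_two_mul (x : ℝ) : tanh x = (exp (2 * x) - 1) / (exp (2 * x) + 1) := by
  have hx := (exp_pos x).ne'
  rw [tanh_eq, exp_neg, two_mul, exp_add]
  field_simp

theorem tendsto_tanh_atTop : Tendsto tanh atTop (𝓝 1) := by
  have hexp : Tendsto (fun x : ℝ => exp (2 * x) + 1) atTop atTop :=
    tendsto_atTop_add_const_right _ _
      (tendsto_exp_atTop.comp (tendsto_id.const_mul_atTop two_pos))
  have h : Tendsto (fun x : ℝ => 1 - 2 / (exp (2 * x) + 1)) atTop (𝓝 (1 - 0)) :=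
    tendsto_const_nhds.sub (tendsto_const_nhds.div_atTop hexp)
  rw [sub_zero] at h
  refine h.congr fun x => ?_
  have : exp (2 * x) + 1 ≠ 0 := by positivity
  rw [tanh_eq_exp_two_mul]
  field_simp
  ring

end Real

noncomputable def catenary (ε : ℝ) (x : ℝ) : ℝ × ℝ := (x, ε * cosh (x / ε))

section Catenary

variable {ε : ℝ}

theorem hasDerivAt_mul_cosh_div (hε : ε ≠ 0) (x : ℝ) :
    HasDerivAt (fun t => ε * cosh (t / ε)) (sinh (x / ε)) x := by
  have h := ((hasDerivAt_cosh (x / ε)).comp x ((hasDerivAt_id x).div_const ε)).const_mul ε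
  refine h.congr_deriv ?_
  field_simp

theorem hasDerivAt_mul_sinh_div (hε : ε ≠ 0) (x : ℝ) :
    HasDerivAt (fun t => ε * sinh (t / ε)) (cosh (x / ε)) x := by
  have h := ((hasDerivAt_sinh (x / ε)).comp x ((hasDerivAt_id x).div_const ε)).const_mul ε
  refine h.congr_deriv ?_
  field_simp

theorem deriv_catenary (hε : ε ≠ 0) (x : ℝ) : deriv (catenary ε) x = (1, sinh (x / ε)) :=
  ((hasDerivAt_id x).prodMk (hasDerivAt_mul_cosh_div hε x)).deriv

theorem hNorm_deriv_catenary (hε : ε ≠ 0) (x : ℝ) :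
    hNorm (catenary ε x) (deriv (catenary ε) x) = ε⁻¹ := by
  have hc := (cosh_pos (x / ε)).ne'
  rw [deriv_catenary hε, hNorm, sqrt_one_add_sinh_sq, catenary]
  field_simp

theorem hTangent_catenary (hε : ε ≠ 0) :
    hTangent (catenary ε) = fun x => (ε, ε * sinh (x / ε)) := by
  funext x
  rw [hTangent, hNorm_deriv_catenary hε, deriv_catenary hε, inv_inv, Prod.smul_mk, smul_eq_mul,
    smul_eq_mul, mul_one]

theorem hCov_catenary_hTangent (hε : ε ≠ 0) (x : ℝ) :
    hCov (catenary ε) (hTangent (catenary ε)) x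
      = (-(2 * sinh (x / ε) / cosh (x / ε)), 2 / cosh (x / ε)) := by
  have hc := (cosh_pos (x / ε)).ne'
  have hfst : deriv (fun t => (catenary ε t).1) x = 1 := deriv_id x
  have hsnd : deriv (fun t => (catenary ε t).2) x = sinh (x / ε) :=
    (hasDerivAt_mul_cosh_div hε x).deriv
  rw [hCov, hTangent_catenary hε, hfst, hsnd, deriv_const, (hasDerivAt_mul_sinh_div hε x).deriv]
  simp only [catenary]
  refine Prod.ext ?_ ?_ <;> field_simp
  · ring
  · linear_combination cosh_sq (x / ε)

theorem hNorm_hCurv_catenary_sq (hε : ε ≠ 0) (x : ℝ) :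
    hNorm (catenary ε x) (hCurv (catenary ε) x) ^ 2 = 4 / cosh (x / ε) ^ 2 := by
  have hc := (cosh_pos (x / ε)).ne'
  rw [hCurv, hNorm_deriv_catenary hε, hCov_catenary_hTangent hε, hNorm, div_pow,
    sq_sqrt (by positivity)]
  simp only [catenary, inv_inv, Prod.smul_mk, smul_eq_mul]
  field_simp
  linear_combination -4 * cosh_sq (x / ε)

theorem hElastic_catenary (hε : ε ≠ 0) (a : ℝ) :
    hElastic (catenary ε) (-a) a = 8 * tanh (a / ε) := by
  have hintegrand : ∀ x, hNorm (catenary ε x) (hCurv (catenary ε) x) ^ 2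
      * hNorm (catenary ε x) (deriv (catenary ε) x) = 4 * ((cosh (x / ε) ^ 2)⁻¹ * (1 / ε)) := by
    intro x
    rw [hNorm_hCurv_catenary_sq hε, hNorm_deriv_catenary hε]
    ring
  have hprimitive : ∀ x, HasDerivAt (fun t => 4 * tanh (t / ε))
      (4 * ((cosh (x / ε) ^ 2)⁻¹ * (1 / ε))) x := fun x =>
    (((hasDerivAt_tanh (x / ε)).comp x ((hasDerivAt_id x).div_const ε)).const_mul 4 :)
  have hcont : Continuous fun x => 4 * ((cosh (x / ε) ^ 2)⁻¹ * (1 / ε)) := by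
    fun_prop (disch := exact fun _ => by positivity)
  rw [hElastic, funext hintegrand,
    intervalIntegral.integral_eq_sub_of_hasDerivAt (fun x _ => hprimitive x)
      (hcont.intervalIntegrable _ _), neg_div, tanh_neg]
  ring

end Catenary

/-- For the catenary curves `u_ε(x) = (x, ε cosh(x/ε))` on `[-a,a]`,
the elastic energy equals `4 (e^{2a/ε}-1)/(e^{2a/ε}+1) + 4 tanh(a/ε)` and tends to `8`
as `ε → 0⁺`. -/
theorem catenary_elastic_energy (a : ℝ) (ha : 0 < a) :
    (∀ ε : ℝ, 0 < ε →
      hElastic (fun x => (x, ε * Real.cosh (x / ε))) (-a) a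
        = 4 * (Real.exp (2 * a / ε) - 1) / (Real.exp (2 * a / ε) + 1)
          + 4 * Real.tanh (a / ε)) ∧
    Filter.Tendsto (fun ε : ℝ => hElastic (fun x => (x, ε * Real.cosh (x / ε))) (-a) a)
      (nhdsWithin 0 (Set.Ioi 0)) (nhds 8) := by
  have henergy (ε : ℝ) (hε : 0 < ε) :
      hElastic (fun x => (x, ε * cosh (x / ε))) (-a) a = 8 * tanh (a / ε) :=
    hElastic_catenary hε.ne' a
  refine ⟨fun ε hε => ?_, ?_⟩
  · rw [henergy ε hε, mul_div_assoc, mul_div_assoc, ← tanh_eq_exp_two_mul]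
    ring
  · have hratio : Tendsto (fun ε => a / ε) (𝓝[>] 0) atTop :=
      tendsto_inv_nhdsGT_zero.const_mul_atTop ha
    have hlim := (tendsto_tanh_atTop.comp hratio).const_mul 8
    rw [mul_one] at hlim
    exact hlim.congr' (eventually_nhdsWithin_of_forall fun ε hε => (henergy ε hε).symm)
end

section
/- Let γ : [α,β] → ℍ² be the canonical parametrization of an orbit-like free elastica with parameter p ∈ (0,1), i.e., with scalar curvature κ(s)² = κ₀²·dn²(rs, p) where κ₀² = 4/(2−p²) and r = 1/sqrt(2−p²). If am(rβ, p) − am(rα, p) > mπ for some m ∈ ℕ, then the elastic energy satisfies E(γ) = ∫_α^β κ(s)² ds > 8m. -/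
/-!
Substituting `θ = am(s/√(2-p²), p)` turns the energy into `(4/√(2-p²)) ∫ √(1 - p² sin²θ) dθ`
over an interval of length at least `mπ`. The integrand is `π`-periodic and nonnegative, so this is
at least `m` times its integral over a period, which is `2E(p)`. Finally `E(p) > √(2-p²)`, because
by Cauchy–Schwarz `√(2-p²) √(cos²θ + (1-p²) sin²θ) ≥ cos θ + (1-p²) sin θ`, whose integral over
`[0, π/2]` is `2 - p²`.
-/

/-- The Jacobi amplitude function `am(·,p)`, inverse of the incomplete elliptic
integral of the first kind `φ ↦ ∫₀^φ (1 - p² sin²θ)^{-1/2} dθ`. -/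
noncomputable def am (p x : ℝ) : ℝ :=
  Function.invFun (fun φ => ∫ θ in (0:ℝ)..φ, 1 / Real.sqrt (1 - p ^ 2 * Real.sin θ ^ 2)) x

/-- The Jacobi elliptic function `sn`. -/
noncomputable def sn (p x : ℝ) : ℝ := Real.sin (am p x)

/-- The Jacobi elliptic function `dn`. -/
noncomputable def dn (p x : ℝ) : ℝ := Real.sqrt (1 - p ^ 2 * sn p x ^ 2)

open Real Function intervalIntegral

noncomputable section

def ellipticDelta (p θ : ℝ) : ℝ := √(1 - p ^ 2 * sin θ ^ 2)

-- `am p` unfolds to `invFun (ellipticF p)`.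
def ellipticF (p φ : ℝ) : ℝ := ∫ θ in 0..φ, 1 / ellipticDelta p θ

def completeEllipticE (p : ℝ) : ℝ := ∫ θ in 0..π / 2, ellipticDelta p θ

end

theorem Function.Periodic.natCast_mul_integral_le {f : ℝ → ℝ} {T : ℝ} (hf : Periodic f T)
    (h_int : ∀ t₁ t₂, IntervalIntegrable f MeasureTheory.volume t₁ t₂) (hf₀ : ∀ x, 0 ≤ f x)
    {a b : ℝ} {m : ℕ} (hab : a + m * T ≤ b) :
    m * ∫ x in 0..T, f x ≤ ∫ x in a..b, f x := by
  have h_periods : ∫ x in a..a + m * T, f x = m * ∫ x in 0..T, f x := by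
    simpa [zsmul_eq_mul, hf.intervalIntegral_add_eq a 0] using
      hf.intervalIntegral_add_zsmul_eq m a h_int
  have h_rest : 0 ≤ ∫ x in a + m * T..b, f x := integral_nonneg hab fun x _ => hf₀ x
  rw [← integral_add_adjacent_intervals (h_int a (a + m * T)) (h_int _ b), h_periods]
  linarith

section ellipticDelta

variable {p : ℝ}

lemma ellipticDelta_pos (hp : p ^ 2 < 1) (θ : ℝ) : 0 < ellipticDelta p θ :=
  sqrt_pos.2 (by nlinarith [sin_sq_le_one θ, sq_nonneg (sin θ)])

lemma ellipticDelta_nonneg (θ : ℝ) : 0 ≤ ellipticDelta p θ := sqrt_nonneg _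

lemma ellipticDelta_zero : ellipticDelta p 0 = 1 := by simp [ellipticDelta]

lemma continuous_ellipticDelta : Continuous (ellipticDelta p) := by
  unfold ellipticDelta; fun_prop

lemma ellipticDelta_periodic : Periodic (ellipticDelta p) π := by
  intro θ; simp [ellipticDelta, sin_add_pi]

lemma ellipticDelta_pi_sub (θ : ℝ) : ellipticDelta p (π - θ) = ellipticDelta p θ := by
  simp [ellipticDelta, sin_pi_sub]

lemma continuous_one_div_ellipticDelta (hp : p ^ 2 < 1) :
    Continuous fun θ => 1 / ellipticDelta p θ :=
  continuous_const.div continuous_ellipticDelta fun θ => (ellipticDelta_pos hp θ).ne'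

end ellipticDelta

section am

variable {p : ℝ}

lemma hasDerivAt_ellipticF (hp : p ^ 2 < 1) (φ : ℝ) :
    HasDerivAt (ellipticF p) (1 / ellipticDelta p φ) φ :=
  have hc := continuous_one_div_ellipticDelta hp
  integral_hasDerivAt_right (hc.intervalIntegrable _ _) (hc.stronglyMeasurableAtFilter _ _)
    hc.continuousAt

lemma strictMono_ellipticF (hp : p ^ 2 < 1) : StrictMono (ellipticF p) :=
  strictMono_of_deriv_pos fun φ => by
    rw [(hasDerivAt_ellipticF hp φ).deriv]
    exact one_div_pos.2 (ellipticDelta_pos hp φ)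

lemma continuous_ellipticF (hp : p ^ 2 < 1) : Continuous (ellipticF p) :=
  continuous_iff_continuousAt.2 fun φ => (hasDerivAt_ellipticF hp φ).continuousAt

lemma surjective_ellipticF (hp : p ^ 2 < 1) : Surjective (ellipticF p) := by
  have hc := continuous_one_div_ellipticDelta hp
  have hper : Periodic (fun θ => 1 / ellipticDelta p θ) π := fun θ => by
    simp only [ellipticDelta_periodic θ]
  have hpos : ∀ θ, 0 < 1 / ellipticDelta p θ := fun θ => one_div_pos.2 (ellipticDelta_pos hp θ)
  exact (continuous_ellipticF hp).surjective
    (hper.tendsto_atTop_intervalIntegral_of_pos' (hc.intervalIntegrable _ _) hpos pi_pos)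
    (hper.tendsto_atBot_intervalIntegral_of_pos' (hc.intervalIntegrable _ _) hpos pi_pos)

lemma am_ellipticF (hp : p ^ 2 < 1) (φ : ℝ) : am p (ellipticF p φ) = φ :=
  leftInverse_invFun (strictMono_ellipticF hp).injective φ

lemma ellipticF_am (hp : p ^ 2 < 1) (x : ℝ) : ellipticF p (am p x) = x :=
  rightInverse_invFun (surjective_ellipticF hp) x

lemma dn_eq_ellipticDelta_am (x : ℝ) : dn p x = ellipticDelta p (am p x) := rfl

lemma integral_dn_sq (hp : p ^ 2 < 1) (a b : ℝ) :
    ∫ u in a..b, dn p u ^ 2 = ∫ θ in am p a..am p b, ellipticDelta p θ := by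
  have h := integral_comp_mul_deriv_of_deriv_nonneg (a := am p a) (b := am p b)
    (g := fun u => dn p u ^ 2)
    (continuous_ellipticF hp).continuousOn
    (fun φ _ => hasDerivAt_ellipticF hp φ) (fun φ _ => (one_div_pos.2 (ellipticDelta_pos hp φ)).le)
  rw [ellipticF_am hp, ellipticF_am hp] at h
  rw [← h]
  refine integral_congr fun θ _ => ?_
  rw [comp_apply, dn_eq_ellipticDelta_am, am_ellipticF hp]
  field_simp [(ellipticDelta_pos hp θ).ne']

end am

section completeEllipticE

variable {p : ℝ}

lemma integral_ellipticDelta_zero_pi :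
    ∫ θ in 0..π, ellipticDelta p θ = 2 * completeEllipticE p := by
  have h_int : ∀ a b, IntervalIntegrable (ellipticDelta p) MeasureTheory.volume a b :=
    fun _ _ => continuous_ellipticDelta.intervalIntegrable _ _
  have h_reflect : ∫ θ in π / 2..π, ellipticDelta p θ = completeEllipticE p := by
    have h := integral_comp_sub_left (ellipticDelta p) (a := 0) (b := π / 2) π
    rw [sub_zero, sub_half] at h
    simp only [← h, ellipticDelta_pi_sub, completeEllipticE]
  rw [← integral_add_adjacent_intervals (h_int 0 (π / 2)) (h_int _ π), h_reflect,
    completeEllipticE, two_mul]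

lemma cos_add_mul_sin_le_sqrt_mul_ellipticDelta (hp : p ^ 2 ≤ 1) (θ : ℝ) :
    cos θ + (1 - p ^ 2) * sin θ ≤ √(2 - p ^ 2) * ellipticDelta p θ := by
  rw [ellipticDelta, ← sqrt_mul (by linarith)]
  refine (le_abs_self _).trans (abs_le_sqrt ?_)
  -- the Cauchy–Schwarz defect is `(1 - p²) (sin θ - cos θ)²`
  nlinarith [sin_sq_add_cos_sq θ, mul_nonneg (sub_nonneg.2 hp) (sq_nonneg (sin θ - cos θ))]

lemma sqrt_two_sub_sq_lt_completeEllipticE (hp : p ^ 2 < 1) :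
    √(2 - p ^ 2) < completeEllipticE p := by
  have hc : 1 < √(2 - p ^ 2) := by
    rw [lt_sqrt zero_le_one]; linarith
  have h_lower : ∫ θ in 0..π / 2, (cos θ + (1 - p ^ 2) * sin θ) = 2 - p ^ 2 := by
    rw [integral_add intervalIntegrable_cos (intervalIntegrable_sin.const_mul _),
      integral_const_mul, integral_cos, integral_sin]
    simp only [sin_pi_div_two, cos_pi_div_two, sin_zero, cos_zero]
    ring
  have h_lt : ∫ θ in 0..π / 2, (cos θ + (1 - p ^ 2) * sin θ)
      < ∫ θ in 0..π / 2, √(2 - p ^ 2) * ellipticDelta p θ :=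
    integral_lt_integral_of_continuousOn_of_le_of_exists_lt (by positivity) (by fun_prop)
      (continuous_ellipticDelta.const_mul _).continuousOn
      (fun θ _ => cos_add_mul_sin_le_sqrt_mul_ellipticDelta hp.le θ)
      ⟨0, ⟨le_rfl, by positivity⟩, by simpa [ellipticDelta_zero] using hc⟩
  rw [h_lower, integral_const_mul, ← completeEllipticE] at h_lt
  refine lt_of_mul_lt_mul_left ?_ (sqrt_nonneg (2 - p ^ 2))
  rwa [mul_self_sqrt (by linarith)]

end completeEllipticE

/-- For the canonical parametrization of an orbit-like free elastica with
parameter `p ∈ (0,1)`, curvature `κ(s)² = κ₀² dn²(rs,p)`, `κ₀² = 4/(2-p²)`,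
`r = 1/√(2-p²)`: if `am(rβ,p) - am(rα,p) > mπ`, then `∫_α^β κ² ds > 8m`. -/
theorem orbitlike_energy_lower_bound (p α β : ℝ) (hp : p ∈ Set.Ioo (0:ℝ) 1)
    (m : ℕ) (hm : 0 < m)
    (h : am p (β / Real.sqrt (2 - p ^ 2)) - am p (α / Real.sqrt (2 - p ^ 2))
          > (m : ℝ) * Real.pi) :
    (∫ s in α..β, (4 / (2 - p ^ 2)) * dn p (s / Real.sqrt (2 - p ^ 2)) ^ 2)
      > 8 * (m : ℝ) := by
  have hp2 : p ^ 2 < 1 := by nlinarith [hp.1, hp.2]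
  set c := √(2 - p ^ 2)
  have hc : 0 < c := sqrt_pos.2 (by linarith)
  have hc2 : c ^ 2 = 2 - p ^ 2 := sq_sqrt (by linarith)
  have h_periods : m * (2 * completeEllipticE p)
      ≤ ∫ θ in am p (α / c)..am p (β / c), ellipticDelta p θ := by
    rw [← integral_ellipticDelta_zero_pi]
    exact ellipticDelta_periodic.natCast_mul_integral_le
      (fun _ _ => continuous_ellipticDelta.intervalIntegrable _ _) ellipticDelta_nonneg (by linarith)
  have h_energy : ∫ s in α..β, 4 / (2 - p ^ 2) * dn p (s / c) ^ 2
      = 4 / c * ∫ θ in am p (α / c)..am p (β / c), ellipticDelta p θ := by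
    rw [integral_const_mul, integral_comp_div (fun u => dn p u ^ 2) hc.ne', integral_dn_sq hp2,
      ← hc2, smul_eq_mul]
    field_simp
  have hm' : (0 : ℝ) < m := Nat.cast_pos.2 hm
  rw [gt_iff_lt, h_energy]
  calc 8 * (m : ℝ) = 4 / c * (m * (2 * c)) := by field_simp; ring
    _ < 4 / c * (m * (2 * completeEllipticE p)) := by
      gcongr; exact sqrt_two_sub_sq_lt_completeEllipticE hp2
    _ ≤ _ := by gcongr
end

section
/- Let λ_n ↘ 0 and p_n ∈ (1/√2, 1) with p_n ↗ 1 be parameters of λ_n-figure-eights, i.e., solutions of the closing condition ∫₀^{π/2} [sin²θ − λ_n/κ₀²] / [(1 − (4κ₀²/(κ₀²−λ_n)²)·cos²θ)·sqrt(1 − p_n² cos²θ)] dθ = 0 with κ₀² = (2λ_n + 4)p_n²/(2p_n² − 1). Then (1 − p_n²)/λ_n² → ∞ as n → ∞. -/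
/-!
Write `c = λ/κ₀²` and `μ = 4κ₀²/(κ₀² - λ)²`, so that the closing integrand is `(sin²θ - c)/D(θ)`
with `D(θ) = (1 - μ cos²θ) √(1 - p² cos²θ)`. The identity
`1 - μ = (1 - p²) + p²(λ + 4 - 4p²)²/(λ + 4p²)²` gives `λ²/50 ≤ 1 - μ ≤ 2(1 - p²) + λ²`.
Splitting `[0, π/2]` at `√(1 - μ)` shows `∫ sin²θ/D ≤ 3 - log (1 - μ) = O(|log λ|)`.
If `1 - p² ≤ Mλ²`, then `D = O(M²λ³)` on `[0, λ]`, so `c ∫ 1/D ≳ 1/(M²λ)`; for small `λ` this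
beats `|log λ|` and the closing integral is negative.
-/

open Filter Real Set intervalIntegral

namespace FigureEight

noncomputable def kappaSq (l p : ℝ) : ℝ := (2 * l + 4) * p ^ 2 / (2 * p ^ 2 - 1)

noncomputable def mu (l p : ℝ) : ℝ := 4 * kappaSq l p / (kappaSq l p - l) ^ 2

-- The closing integrand is `(sin θ ^ 2 - l / kappaSq l p) / denom (mu l p) p θ`.
noncomputable def denom (μ q θ : ℝ) : ℝ := (1 - μ * cos θ ^ 2) * √(1 - q ^ 2 * cos θ ^ 2)

section Denominator

variable {μ q θ : ℝ}

theorem denom_pos (hμ : μ < 1) (hq : q ^ 2 < 1) (θ : ℝ) : 0 < denom μ q θ := by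
  have hc := cos_sq_le_one θ
  have hc0 := sq_nonneg (cos θ)
  refine mul_pos ?_ (sqrt_pos.2 ?_)
  · rcases le_total 0 μ with h | h <;> nlinarith
  · nlinarith

theorem continuous_denom (μ q : ℝ) : Continuous (denom μ q) := by
  unfold denom; fun_prop

theorem intervalIntegrable_div_denom {f : ℝ → ℝ} (hf : Continuous f) (hμ : μ < 1) (hq : q ^ 2 < 1)
    (a b : ℝ) : IntervalIntegrable (fun θ => f θ / denom μ q θ) MeasureTheory.volume a b :=
  (hf.div (continuous_denom μ q) fun θ => (denom_pos hμ hq θ).ne').intervalIntegrable a b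

theorem half_le_sqrt_one_sub_mul_cos_sq (hq : q ^ 2 ≤ 1) (hθ₀ : 0 ≤ θ) (hθ : θ ≤ π / 2) :
    θ / 2 ≤ √(1 - q ^ 2 * cos θ ^ 2) := by
  have hjordan : θ / 2 ≤ sin θ := by
    have : θ / 2 ≤ 2 / π * θ := by
      rw [div_mul_eq_mul_div, le_div_iff₀ pi_pos]; nlinarith [pi_le_four]
    exact this.trans (mul_le_sin hθ₀ hθ)
  apply le_sqrt_of_sq_le
  nlinarith [sin_sq_add_cos_sq θ, sq_nonneg (cos θ)]

theorem one_sub_mul_half_le_denom (hμ₀ : 0 ≤ μ) (hμ : μ ≤ 1) (hq : q ^ 2 ≤ 1) (hθ₀ : 0 ≤ θ)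
    (hθ : θ ≤ π / 2) : (1 - μ) * (θ / 2) ≤ denom μ q θ := by
  have hA : 1 - μ ≤ 1 - μ * cos θ ^ 2 := by nlinarith [cos_sq_le_one θ]
  exact mul_le_mul hA (half_le_sqrt_one_sub_mul_cos_sq hq hθ₀ hθ) (by positivity)
    (by linarith)

theorem sin_sq_mul_half_le_denom (hμ : μ ≤ 1) (hq : q ^ 2 ≤ 1) (hθ₀ : 0 ≤ θ) (hθ : θ ≤ π / 2) :
    sin θ ^ 2 * (θ / 2) ≤ denom μ q θ := by
  have hA : sin θ ^ 2 ≤ 1 - μ * cos θ ^ 2 := by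
    nlinarith [sin_sq_add_cos_sq θ, sq_nonneg (cos θ)]
  exact mul_le_mul hA (half_le_sqrt_one_sub_mul_cos_sq hq hθ₀ hθ) (by positivity)
    ((sq_nonneg _).trans hA)

theorem integral_sin_sq_div_denom_le (hμ₀ : 0 ≤ μ) (hμ : μ < 1) (hq : q ^ 2 < 1) :
    ∫ θ in 0..π / 2, sin θ ^ 2 / denom μ q θ ≤ 3 - log (1 - μ) := by
  have ha₀ : 0 < 1 - μ := by linarith
  set b := √(1 - μ)
  have hb₀ : 0 < b := sqrt_pos.2 ha₀
  have hb : b ≤ π / 2 := by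
    have : b ≤ 1 := sqrt_le_one.2 (by linarith)
    linarith [pi_gt_three]
  have hint := intervalIntegrable_div_denom (f := fun θ => sin θ ^ 2) (by fun_prop) hμ hq
  have hnear : ∫ θ in 0..b, sin θ ^ 2 / denom μ q θ ≤ 1 := by
    calc ∫ θ in 0..b, sin θ ^ 2 / denom μ q θ
        ≤ ∫ θ in 0..b, 2 / (1 - μ) * θ := by
          refine integral_mono_on hb₀.le (hint _ _)
            ((continuous_const.mul continuous_id).intervalIntegrable _ _) fun θ hθ => ?_
          rw [div_le_iff₀ (denom_pos hμ hq θ)]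
          calc sin θ ^ 2 ≤ θ ^ 2 := sin_sq_le_sq
            _ = 2 / (1 - μ) * θ * ((1 - μ) * (θ / 2)) := by field_simp
            _ ≤ 2 / (1 - μ) * θ * denom μ q θ := by
              gcongr
              · exact mul_nonneg (by positivity) hθ.1
              · exact one_sub_mul_half_le_denom hμ₀ hμ.le hq.le hθ.1 (hθ.2.trans hb)
      _ = 1 := by
          rw [integral_const_mul, integral_id, sq_sqrt ha₀.le]; field_simp; ring
  have hfar : ∫ θ in b..π / 2, sin θ ^ 2 / denom μ q θ ≤ 2 - log (1 - μ) := by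
    calc ∫ θ in b..π / 2, sin θ ^ 2 / denom μ q θ
        ≤ ∫ θ in b..π / 2, 2 * (1 / θ) := by
          refine integral_mono_on hb (hint _ _) ?_ fun θ hθ => ?_
          · refine ContinuousOn.intervalIntegrable (continuousOn_const.mul ?_)
            exact continuousOn_const.div continuousOn_id
              fun x hx => (hb₀.trans_le (uIcc_of_le hb ▸ hx).1).ne'
          have hθ₀ : 0 < θ := hb₀.trans_le hθ.1
          rw [div_le_iff₀ (denom_pos hμ hq θ)]
          calc sin θ ^ 2 = 2 * (1 / θ) * (sin θ ^ 2 * (θ / 2)) := by field_simp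
            _ ≤ 2 * (1 / θ) * denom μ q θ := by
              gcongr
              exact sin_sq_mul_half_le_denom hμ.le hq.le hθ₀.le hθ.2
      _ = 2 * log (π / 2) - log (1 - μ) := by
          rw [integral_const_mul, integral_one_div (notMem_uIcc_of_lt hb₀ (by positivity)),
            log_div (by positivity) hb₀.ne', log_sqrt ha₀.le]
          ring
      _ ≤ 2 - log (1 - μ) := by
          linarith [log_le_sub_one_of_pos (by positivity : 0 < π / 2), pi_le_four]
  rw [← integral_add_adjacent_intervals (hint 0 b) (hint b (π / 2))]
  linarith

theorem inv_le_integral_one_div_denom {t C : ℝ} (ht : 0 < t) (htπ : t ≤ π / 2) (hμ : μ < 1)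
    (hq : q ^ 2 < 1) (hμC : 1 - μ ≤ C * t ^ 2) (hqC : 1 - q ^ 2 ≤ C * t ^ 2) :
    1 / ((C + 1) ^ 2 * t ^ 2) ≤ ∫ θ in 0..π / 2, 1 / denom μ q θ := by
  have hC : 0 ≤ C := by
    by_contra! h
    nlinarith [mul_neg_of_neg_of_pos h (pow_pos ht 2)]
  have hint := intervalIntegrable_div_denom (f := fun _ => 1) continuous_const hμ hq
  have hnear : ∀ θ ∈ Icc 0 t, denom μ q θ ≤ (C + 1) ^ 2 * t ^ 3 := by
    intro θ hθ
    have hsin : sin θ ^ 2 ≤ t ^ 2 := sin_sq_le_sq.trans (pow_le_pow_left₀ hθ.1 hθ.2 2)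
    have hcos := sin_sq_add_cos_sq θ
    have hA : 1 - μ * cos θ ^ 2 ≤ (C + 1) * t ^ 2 := by
      nlinarith [mul_nonneg (sub_nonneg.2 hμ.le) (sq_nonneg (sin θ))]
    have hB : √(1 - q ^ 2 * cos θ ^ 2) ≤ (C + 1) * t := by
      refine sqrt_le_iff.2 ⟨by positivity, ?_⟩
      nlinarith [mul_nonneg (sub_nonneg.2 hq.le) (sq_nonneg (sin θ)), sq_nonneg q,
        mul_nonneg hC (sq_nonneg t), mul_nonneg (mul_nonneg hC hC) (sq_nonneg t)]
    calc denom μ q θ ≤ ((C + 1) * t ^ 2) * ((C + 1) * t) :=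
          mul_le_mul hA hB (sqrt_nonneg _) (by positivity)
      _ = (C + 1) ^ 2 * t ^ 3 := by ring
  calc 1 / ((C + 1) ^ 2 * t ^ 2) = ∫ _ in 0..t, 1 / ((C + 1) ^ 2 * t ^ 3) := by
        rw [integral_const, smul_eq_mul]; field_simp; ring
    _ ≤ ∫ θ in 0..t, 1 / denom μ q θ :=
        integral_mono_on ht.le intervalIntegrable_const (hint _ _) fun θ hθ =>
          one_div_le_one_div_of_le (denom_pos hμ hq θ) (hnear θ hθ)
    _ ≤ ∫ θ in 0..π / 2, 1 / denom μ q θ := by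
        rw [← integral_add_adjacent_intervals (hint 0 t) (hint t (π / 2)), le_add_iff_nonneg_right]
        exact integral_nonneg htπ fun θ _ => (one_div_pos.2 (denom_pos hμ hq θ)).le

theorem integral_sin_sq_sub_div_denom_le {t C c : ℝ} (ht : 0 < t) (htπ : t ≤ π / 2) (hμ₀ : 0 ≤ μ)
    (hμ : μ < 1) (hq : q ^ 2 < 1) (hμC : 1 - μ ≤ C * t ^ 2) (hqC : 1 - q ^ 2 ≤ C * t ^ 2)
    (hc : 0 ≤ c) :
    ∫ θ in 0..π / 2, (sin θ ^ 2 - c) / denom μ q θ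
      ≤ 3 - log (1 - μ) - c / ((C + 1) ^ 2 * t ^ 2) := by
  have hsplit : ∫ θ in 0..π / 2, (sin θ ^ 2 - c) / denom μ q θ
      = (∫ θ in 0..π / 2, sin θ ^ 2 / denom μ q θ) - c * ∫ θ in 0..π / 2, 1 / denom μ q θ := by
    rw [← integral_const_mul, ← integral_sub
      (intervalIntegrable_div_denom (f := fun θ => sin θ ^ 2) (by fun_prop) hμ hq _ _)
      ((intervalIntegrable_div_denom continuous_const hμ hq _ _).const_mul c)]
    simp only [sub_div, mul_one_div]
  have hlower := mul_le_mul_of_nonneg_left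
    (inv_le_integral_one_div_denom ht htπ hμ hq hμC hqC) hc
  rw [mul_one_div] at hlower
  rw [hsplit]
  linarith [integral_sin_sq_div_denom_le hμ₀ hμ hq]

end Denominator

section Parameters

variable {l p : ℝ}

theorem kappaSq_pos (hl : 0 ≤ l) (hp : 1 / 2 < p ^ 2) : 0 < kappaSq l p := by
  unfold kappaSq
  have : 0 < 2 * p ^ 2 - 1 := by linarith
  positivity

theorem kappaSq_le_twelve (hl : l ≤ 1) (hp : 3 / 4 ≤ p ^ 2) : kappaSq l p ≤ 12 := by
  rw [kappaSq, div_le_iff₀ (by linarith)]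
  nlinarith

theorem one_sub_mu_eq (hp : 2 * p ^ 2 - 1 ≠ 0) (hlp : l + 4 * p ^ 2 ≠ 0) :
    1 - mu l p = (1 - p ^ 2) + p ^ 2 * (l + 4 - 4 * p ^ 2) ^ 2 / (l + 4 * p ^ 2) ^ 2 := by
  have hκ : kappaSq l p - l = (l + 4 * p ^ 2) / (2 * p ^ 2 - 1) := by
    rw [kappaSq]; field_simp; ring
  rw [mu, hκ, kappaSq]
  field_simp
  ring

theorem sq_div_fifty_le_one_sub_mu (hl : 0 ≤ l) (hl₁ : l ≤ 1) (hp : 1 / 2 < p ^ 2)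
    (hp₁ : p ^ 2 ≤ 1) : l ^ 2 / 50 ≤ 1 - mu l p := by
  rw [one_sub_mu_eq (by linarith) (by linarith)]
  have hnum : l ^ 2 ≤ (l + 4 - 4 * p ^ 2) ^ 2 := by nlinarith
  have hden : (l + 4 * p ^ 2) ^ 2 ≤ 25 := by nlinarith
  have : l ^ 2 / 50 ≤ p ^ 2 * (l + 4 - 4 * p ^ 2) ^ 2 / (l + 4 * p ^ 2) ^ 2 := by
    rw [div_le_div_iff₀ (by norm_num) (by positivity)]
    nlinarith [mul_le_mul_of_nonneg_left hden (sq_nonneg l),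
      mul_le_mul_of_nonneg_left hnum (sq_nonneg p)]
  linarith

theorem one_sub_mu_le (hl : 0 ≤ l) (hp : 3 / 4 ≤ p ^ 2) (hp₁ : p ^ 2 ≤ 1) :
    1 - mu l p ≤ 2 * (1 - p ^ 2) + l ^ 2 := by
  rw [one_sub_mu_eq (by linarith) (by linarith)]
  have : p ^ 2 * (l + 4 - 4 * p ^ 2) ^ 2 / (l + 4 * p ^ 2) ^ 2 ≤ (1 - p ^ 2) + l ^ 2 := by
    rw [div_le_iff₀ (by positivity)]
    nlinarith [sq_nonneg (l - 4 * (1 - p ^ 2)), mul_nonneg hl (sub_nonneg.2 hp₁)]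
  linarith

theorem inv_le_mul_log_of_closing {M : ℝ} (hl : 0 < l) (hl₁ : l ≤ 1) (hp : 3 / 4 ≤ p ^ 2)
    (hp₁ : p ^ 2 < 1) (hM : 1 - p ^ 2 ≤ M * l ^ 2)
    (hclose : ∫ θ in 0..π / 2, (sin θ ^ 2 - l / kappaSq l p) / denom (mu l p) p θ = 0) :
    1 / (12 * (2 * M + 2) ^ 2) ≤ l * (3 + log 50 - 2 * log l) := by
  have hM₀ : 0 ≤ M := by nlinarith
  have hκ := kappaSq_pos hl.le (by linarith : 1 / 2 < p ^ 2)
  have hμ₀ : 0 ≤ mu l p := by unfold mu; positivity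
  have hμlow := sq_div_fifty_le_one_sub_mu hl.le hl₁ (by linarith) hp₁.le
  have hμ : mu l p < 1 := by nlinarith
  have hμC : 1 - mu l p ≤ (2 * M + 1) * l ^ 2 := by linarith [one_sub_mu_le hl.le hp hp₁.le]
  have hqC : 1 - p ^ 2 ≤ (2 * M + 1) * l ^ 2 := by nlinarith
  have hc : l / 12 ≤ l / kappaSq l p :=
    div_le_div_of_nonneg_left hl.le hκ (kappaSq_le_twelve hl₁ hp)
  have hbound := integral_sin_sq_sub_div_denom_le hl (by linarith [pi_gt_three]) hμ₀ hμ hp₁ hμC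
    hqC (by positivity : 0 ≤ l / kappaSq l p)
  rw [hclose, show 2 * M + 1 + 1 = 2 * M + 2 by ring] at hbound
  have hlog : -log (1 - mu l p) ≤ log 50 - 2 * log l := by
    have := log_le_log (by positivity) hμlow
    rw [log_div (by positivity) (by norm_num), log_pow] at this
    push_cast at this
    linarith
  have hc' : l / 12 / ((2 * M + 2) ^ 2 * l ^ 2) ≤ l / kappaSq l p / ((2 * M + 2) ^ 2 * l ^ 2) :=
    div_le_div_of_nonneg_right hc (by positivity)
  calc 1 / (12 * (2 * M + 2) ^ 2) = l * (l / 12 / ((2 * M + 2) ^ 2 * l ^ 2)) := by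
        field_simp
    _ ≤ l * (3 + log 50 - 2 * log l) := mul_le_mul_of_nonneg_left (by linarith) hl.le

end Parameters

end FigureEight

theorem figure_eight_parameter_asymptotics_general (lam p : ℕ → ℝ)
    (hlam_pos : ∀ n, 0 < lam n)
    (hlam_lim : Tendsto lam atTop (nhds 0))
    (hp_mem : ∀ n, p n ∈ Set.Ioo (1 / Real.sqrt 2) 1)
    (hclose : ∀ n,
      (∫ θ in (0:ℝ)..(Real.pi / 2),
        (Real.sin θ ^ 2 - lam n / ((2 * lam n + 4) * p n ^ 2 / (2 * p n ^ 2 - 1))) /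
          ((1 - (4 * ((2 * lam n + 4) * p n ^ 2 / (2 * p n ^ 2 - 1)) /
              (((2 * lam n + 4) * p n ^ 2 / (2 * p n ^ 2 - 1)) - lam n) ^ 2) *
                Real.cos θ ^ 2) *
            Real.sqrt (1 - p n ^ 2 * Real.cos θ ^ 2))) = 0) :
    Tendsto (fun n => (1 - p n ^ 2) / lam n ^ 2) atTop atTop := by
  refine tendsto_atTop.2 fun M => ?_
  set M' := max M 0
  have hε : (0 : ℝ) < 1 / (12 * (2 * M' + 2) ^ 2) := by positivity
  have hlog : Tendsto (fun n => lam n * (3 + log 50 - 2 * log (lam n))) atTop (nhds 0) := by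
    have hg : Continuous fun x : ℝ => x * (3 + log 50) - 2 * (x * log x) := by fun_prop
    convert (hg.tendsto 0).comp hlam_lim using 1
    · ext n; simp only [Function.comp_apply]; ring
    · simp
  have hsq : Tendsto (fun n => M' * lam n ^ 2) atTop (nhds 0) := by
    simpa using (hlam_lim.pow 2).const_mul M'
  filter_upwards [hlam_lim.eventually_le_const one_pos,
    hsq.eventually_le_const (by norm_num : (0 : ℝ) < 1 / 4), hlog.eventually_lt_const hε]
    with n hl₁ hsmall hnlog
  by_contra! hlt
  have hl := hlam_pos n
  have hM : 1 - p n ^ 2 ≤ M' * lam n ^ 2 := by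
    rw [div_lt_iff₀ (by positivity)] at hlt
    nlinarith [le_max_left M 0]
  obtain ⟨hp_gt, hp_lt⟩ := hp_mem n
  have hp₀ : 0 < p n := lt_of_le_of_lt (by positivity) hp_gt
  exact hnlog.not_ge (FigureEight.inv_le_mul_log_of_closing hl hl₁ (by linarith) (by nlinarith) hM
    (hclose n))

/-- If `λₙ ↘ 0` and `pₙ ∈ (1/√2, 1)` with `pₙ ↗ 1` satisfy the closing
condition of `λₙ`-figure-eights, then `(1 - pₙ²)/λₙ² → ∞`. -/
theorem figure_eight_parameter_asymptotics (lam p : ℕ → ℝ)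
    (hlam_pos : ∀ n, 0 < lam n) (hlam_anti : Antitone lam)
    (hlam_lim : Tendsto lam atTop (nhds 0))
    (hp_mem : ∀ n, p n ∈ Set.Ioo (1 / Real.sqrt 2) 1) (hp_mono : Monotone p)
    (hp_lim : Tendsto p atTop (nhds 1))
    (hclose : ∀ n,
      (∫ θ in (0:ℝ)..(Real.pi / 2),
        (Real.sin θ ^ 2 - lam n / ((2 * lam n + 4) * p n ^ 2 / (2 * p n ^ 2 - 1))) /
          ((1 - (4 * ((2 * lam n + 4) * p n ^ 2 / (2 * p n ^ 2 - 1)) /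
              (((2 * lam n + 4) * p n ^ 2 / (2 * p n ^ 2 - 1)) - lam n) ^ 2) *
                Real.cos θ ^ 2) *
            Real.sqrt (1 - p n ^ 2 * Real.cos θ ^ 2))) = 0) :
    Tendsto (fun n => (1 - p n ^ 2) / lam n ^ 2) atTop atTop :=
  figure_eight_parameter_asymptotics_general lam p hlam_pos hlam_lim hp_mem hclose
end
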